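/- arXiv:1408.3298 — 3 statements merged into one kernel-verified Lean document; each statement's English description precedes it below -/
import Mathlib

section
/- Let K be an algebraically closed field with a non-Archimedean absolute value. Then the completion of K is algebraically closed (Kürschák's theorem). -/
open Polynomial IsUltrametricDist

-- multiset min lemma
lemma kursch_multiset_le {t : ℝ} (ht : 0 ≤ t) :
    ∀ {s : Multiset ℝ}, (∀ x ∈ s, 0 ≤ x) → s ≠ 0 → s.prod ≤ t ^ Multiset.card s →
      ∃ x ∈ s, x ≤ t := by
  intro s
  induction s using Multiset.induction_on with
  | empty => intro _ h; exact absurd rfl h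
  | cons a s ih =>
    intro h0 _ hprod
    by_cases hat : a ≤ t
    · exact ⟨a, Multiset.mem_cons_self a s, hat⟩
    push_neg at hat
    rcases eq_or_ne s 0 with rfl | hs
    · simp only [Multiset.prod_cons, Multiset.prod_zero, mul_one, Multiset.card_cons,
        Multiset.card_zero, zero_add, pow_one] at hprod
      exact absurd hprod hat.not_ge
    have ha : 0 < a := ht.trans_lt hat
    have hsp : s.prod ≤ t ^ Multiset.card s := by
      have h1 : a * s.prod ≤ a * t ^ Multiset.card s := by
        calc a * s.prod = (a ::ₘ s).prod := (Multiset.prod_cons a s).symm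
          _ ≤ t ^ Multiset.card (a ::ₘ s) := hprod
          _ = t * t ^ Multiset.card s := by rw [Multiset.card_cons, pow_succ']
          _ ≤ a * t ^ Multiset.card s :=
            mul_le_mul_of_nonneg_right hat.le (pow_nonneg ht _)
      exact le_of_mul_le_mul_left h1 ha
    obtain ⟨x, hx, hxt⟩ := ih (fun x hx => h0 x (Multiset.mem_cons_of_mem hx)) hs hsp
    exact ⟨x, Multiset.mem_cons_of_mem hx, hxt⟩

-- approximation of a monic polynomial by (the image of) a monic polynomial over K
lemma kursch_approx {K L : Type*} [NormedField K] [NormedField L]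
    (i : K →+* L) (hdense : DenseRange i) (p : L[X]) (hm : p.Monic)
    (hn : 0 < p.natDegree) {η : ℝ} (hη : 0 < η) :
    ∃ q : K[X], q.Monic ∧ q.natDegree = p.natDegree ∧
      (∀ j, ‖(q.map i - p).coeff j‖ ≤ η) ∧ (q.map i - p).natDegree < p.natDegree := by
  set n := p.natDegree with hn'
  have hc : ∀ j : ℕ, ∃ c : K, ‖i c - p.coeff j‖ ≤ η := by
    intro j
    obtain ⟨c, hc⟩ := hdense.exists_dist_lt (p.coeff j) hη
    exact ⟨c, by rw [dist_eq_norm, norm_sub_rev] at hc; exact hc.le⟩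
  choose c hcη using hc
  set q : K[X] := X ^ n + ∑ j ∈ Finset.range n, C (c j) * X ^ j with hq
  have hdeglt : (∑ j ∈ Finset.range n, C (c j) * X ^ j).degree < (n : WithBot ℕ) := by
    apply lt_of_le_of_lt (Polynomial.degree_sum_le _ _)
    rw [Finset.sup_lt_iff (by exact_mod_cast WithBot.bot_lt_coe n)]
    intro j hj
    exact lt_of_le_of_lt (degree_C_mul_X_pow_le _ _)
      (by exact_mod_cast Finset.mem_range.mp hj)
  have hqm : q.Monic := monic_X_pow_add hdeglt
  have hqd : q.natDegree = n := by
    have hdq : q.degree = n := by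
      rw [hq, degree_add_eq_left_of_degree_lt (by rwa [degree_X_pow]), degree_X_pow]
    exact natDegree_eq_of_degree_eq_some hdq
  have hqcoeff : ∀ j, j < n → q.coeff j = c j := by
    intro j hj
    rw [hq, coeff_add, coeff_X_pow, if_neg hj.ne, zero_add, finset_sum_coeff]
    rw [Finset.sum_eq_single j]
    · simp
    · intro b _ hb; rw [coeff_C_mul, coeff_X_pow, if_neg (Ne.symm hb), mul_zero]
    · intro h; exact absurd (Finset.mem_range.mpr hj) h
  have hcoeffn : ∀ j, n ≤ j → (q.map i - p).coeff j = 0 := by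
    intro j hj
    rcases eq_or_lt_of_le hj with rfl | hj'
    · simp [coeff_sub, coeff_map, hqd ▸ hqm.coeff_natDegree, hn' ▸ hm.coeff_natDegree]
    · have h1 : (q.map i).coeff j = 0 := by
        apply coeff_eq_zero_of_natDegree_lt
        rw [hqm.natDegree_map, hqd]; exact hj'
      have h2 : p.coeff j = 0 := coeff_eq_zero_of_natDegree_lt (hn' ▸ hj')
      simp [coeff_sub, h1, h2]
  refine ⟨q, hqm, hqd, ?_, ?_⟩
  · intro j
    rcases lt_or_ge j n with hj | hj
    · rw [coeff_sub, coeff_map, hqcoeff j hj]; exact hcη j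
    · rw [hcoeffn j hj, norm_zero]; exact hη.le
  · rcases eq_or_ne (q.map i - p) 0 with h0 | h0
    · simpa [h0] using hn
    · rw [natDegree_lt_iff_degree_lt h0]
      rw [degree_lt_iff_coeff_zero]
      intro m hm'
      exact hcoeffn m (by exact_mod_cast hm')

lemma kursch_evalBound {L : Type*} [NormedField L] [IsUltrametricDist L]
    (r : L[X]) {n : ℕ} (hr : r.natDegree < n) {η R : ℝ} (hη : 0 ≤ η)
    (hcoeff : ∀ j, ‖r.coeff j‖ ≤ η) (hR : 1 ≤ R) (y : L) (hy : ‖y‖ ≤ R) :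
    ‖r.eval y‖ ≤ η * R ^ n := by
  rw [eval_eq_sum_range' hr]
  apply norm_sum_le_of_forall_le_of_nonneg (by positivity)
  intro j hj
  rw [norm_mul, norm_pow]
  have h1 : ‖y‖ ^ j ≤ R ^ j := pow_le_pow_left₀ (norm_nonneg y) hy j
  have h2 : (R : ℝ) ^ j ≤ R ^ n := pow_le_pow_right₀ hR (Finset.mem_range.mp hj).le
  exact mul_le_mul (hcoeff j) (h1.trans h2) (by positivity) hη

lemma kursch_norm_multiset_prod {L : Type*} [NormedField L] (s : Multiset L) :
    ‖s.prod‖ = (s.map fun z => ‖z‖).prod := by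
  induction s using Multiset.induction_on with
  | empty => simp
  | cons a s ih => simp [norm_mul, ih]

lemma kursch_step {K L : Type*} [NormedField K] [IsAlgClosed K]
    [NormedField L] [IsUltrametricDist L]
    (i : K →+* L) (hdense : DenseRange i)
    (p : L[X]) (hm : p.Monic) (hn : 0 < p.natDegree)
    {R : ℝ} (hR : 1 ≤ R) {x : L} (hx : ‖x‖ ≤ R)
    (hδR : ‖p.eval x‖ ≤ R ^ p.natDegree) (hpos : 0 < ‖p.eval x‖) :
    ∃ y : L, ‖y‖ ≤ R ∧ ‖y - x‖ ≤ ‖p.eval x‖ ^ (1 / (p.natDegree : ℝ)) ∧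
      ‖p.eval y‖ ≤ ‖p.eval x‖ / 2 := by
  set n := p.natDegree with hn'
  set δ := ‖p.eval x‖ with hδ
  set t := δ ^ (1 / (n : ℝ)) with ht
  have hnR : (0:ℝ) < R ^ n := by positivity
  set η := δ / (2 * R ^ n) with hη
  have hηpos : 0 < η := by positivity
  -- t ^ n = δ
  have htn : t ^ n = δ := by
    rw [ht, ← Real.rpow_natCast (δ ^ (1 / (n:ℝ))) n, ← Real.rpow_mul hpos.le,
      one_div, inv_mul_cancel₀ (by exact_mod_cast hn.ne'), Real.rpow_one]
  have ht0 : 0 ≤ t := Real.rpow_nonneg hpos.le _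
  have htR : t ≤ R := by
    have : t ^ n ≤ R ^ n := htn ▸ hδR
    exact le_of_pow_le_pow_left₀ hn.ne' (by positivity) this
  -- approximate p
  obtain ⟨q, hqm, hqd, hqc, hqdeg⟩ := kursch_approx i hdense p hm hn hηpos
  -- q splits over K
  have hqsplits : q.Splits := IsAlgClosed.splits q
  have hqprod : q = (q.roots.map fun a => X - C a).prod :=
    hqsplits.eq_prod_roots_of_monic hqm
  have hqcard : Multiset.card q.roots = n := by
    rw [hn', ← hqd]; exact (splits_iff_card_roots.mp hqsplits)
  -- the evaluation of (map i q) at x as a product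
  have hmapeval : ∀ z : L, (q.map i).eval z = (q.roots.map fun a => z - i a).prod := by
    intro z
    conv_lhs => rw [hqprod]
    rw [Polynomial.map_multiset_prod, eval_multiset_prod, Multiset.map_map, Multiset.map_map]
    congr 1
    exact Multiset.map_congr rfl fun a _ => by simp
  -- bound on the perturbation
  have hpert : ∀ z : L, ‖z‖ ≤ R → ‖(q.map i - p).eval z‖ ≤ δ / 2 := by
    intro z hz
    have := kursch_evalBound (q.map i - p) (hqdeg.trans_le le_rfl) hηpos.le hqc hR z hz
    calc ‖(q.map i - p).eval z‖ ≤ η * R ^ n := this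
      _ = δ / 2 := by rw [hη]; field_simp
  -- ‖(q.map i).eval x‖ ≤ δ
  have hqx : ‖(q.map i).eval x‖ ≤ δ := by
    have : (q.map i).eval x = (q.map i - p).eval x + p.eval x := by
      rw [eval_sub]; ring
    rw [this]
    refine (norm_add_le_max _ _).trans (max_le ?_ le_rfl)
    exact (hpert x hx).trans (by linarith)
  -- find a close root
  have hprodle : (q.roots.map fun a => ‖x - i a‖).prod ≤
      t ^ Multiset.card (q.roots.map fun a => ‖x - i a‖) := by
    have : (q.roots.map fun a => ‖x - i a‖).prod = ‖(q.map i).eval x‖ := by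
      rw [hmapeval x, kursch_norm_multiset_prod, Multiset.map_map]
      rfl
    rw [this, Multiset.card_map, hqcard, htn]
    exact hqx
  have hroots0 : q.roots ≠ 0 := by
    intro h
    rw [h] at hqcard
    simp only [Multiset.card_zero] at hqcard
    exact hn.ne' hqcard.symm
  obtain ⟨v, hv, hvt⟩ := kursch_multiset_le ht0
    (by intro y hy; simp only [Multiset.mem_map] at hy; obtain ⟨a, _, rfl⟩ := hy; positivity)
    (by simpa using hroots0) hprodle
  obtain ⟨a, ha, rfl⟩ := Multiset.mem_map.mp hv
  -- y := i a works
  refine ⟨i a, ?_, ?_, ?_⟩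
  · -- ‖i a‖ ≤ R
    have h := norm_add_le_max x (-(x - i a))
    rw [← sub_eq_add_neg, sub_sub_cancel, norm_neg] at h
    exact h.trans (max_le hx (hvt.trans htR))
  · rw [← norm_sub_rev]; exact hvt
  · -- ‖p.eval (i a)‖ ≤ δ / 2
    have hia : ‖i a‖ ≤ R := by
      have h := norm_add_le_max x (-(x - i a))
      rw [← sub_eq_add_neg, sub_sub_cancel, norm_neg] at h
      exact h.trans (max_le hx (hvt.trans htR))
    have hroot : (q.map i).eval (i a) = 0 := by
      rw [hmapeval (i a)]
      apply Multiset.prod_eq_zero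
      rw [Multiset.mem_map]
      exact ⟨a, ha, by ring⟩
    have : p.eval (i a) = -((q.map i - p).eval (i a)) + (q.map i).eval (i a) := by
      rw [eval_sub]; ring
    rw [this, hroot, add_zero, norm_neg]
    exact hpert (i a) hia



/-- Kürschák's theorem: the completion of an algebraically closed non-Archimedean
valued field is algebraically closed. The completion is formulated abstractly:
`L` is a complete valued field containing (an isometric image of) `K` as a dense
subfield. -/
theorem completion_of_algClosed_isAlgClosed
    {K L : Type*} [NormedField K] [IsUltrametricDist K] [IsAlgClosed K]
    [NormedField L] [IsUltrametricDist L] [CompleteSpace L]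
    (i : K →+* L) (hi : Isometry i) (hdense : DenseRange i) :
    IsAlgClosed L := by
  apply IsAlgClosed.of_exists_root
  intro p hm hirr
  set n := p.natDegree with hn'
  have hn : 0 < n := by
    rcases Nat.eq_zero_or_pos n with h0 | h
    · exact absurd ((Polynomial.Monic.natDegree_eq_zero hm).mp h0 ▸ isUnit_one) hirr.not_isUnit
    · exact h
  -- setup
  by_cases h0 : p.eval 0 = 0
  · exact ⟨0, h0⟩
  set δ₀ := ‖p.eval 0‖ with hδ₀
  have hδ₀pos : 0 < δ₀ := norm_pos_iff.mpr h0
  set R : ℝ := max 1 (δ₀ ^ (1 / (n : ℝ))) with hR'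
  have hR : 1 ≤ R := le_max_left _ _
  have hRpos : (0:ℝ) < R := lt_of_lt_of_le one_pos hR
  have hδ₀R : δ₀ ≤ R ^ n := by
    have h1 : (δ₀ ^ (1 / (n : ℝ))) ^ n = δ₀ := by
      rw [← Real.rpow_natCast (δ₀ ^ (1 / (n:ℝ))) n, ← Real.rpow_mul hδ₀pos.le,
        one_div, inv_mul_cancel₀ (by exact_mod_cast hn.ne'), Real.rpow_one]
    calc δ₀ = (δ₀ ^ (1 / (n : ℝ))) ^ n := h1.symm
      _ ≤ R ^ n := pow_le_pow_left₀ (Real.rpow_nonneg hδ₀pos.le _) (le_max_right _ _) n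
  -- the recursive step
  have key : ∀ (k : ℕ) (x : L), ∃ y : L,
      (‖x‖ ≤ R ∧ ‖p.eval x‖ ≤ δ₀ / 2 ^ k) →
      (‖y‖ ≤ R ∧ ‖p.eval y‖ ≤ δ₀ / 2 ^ (k + 1) ∧
        ‖y - x‖ ≤ (δ₀ / 2 ^ k) ^ (1 / (n : ℝ))) := by
    intro k x
    by_cases hx : ‖x‖ ≤ R ∧ ‖p.eval x‖ ≤ δ₀ / 2 ^ k
    swap
    · exact ⟨x, fun h => absurd h hx⟩
    obtain ⟨hx1, hx2⟩ := hx
    by_cases hev : p.eval x = 0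
    · refine ⟨x, fun _ => ⟨hx1, ?_, ?_⟩⟩
      · rw [hev, norm_zero]; positivity
      · rw [sub_self, norm_zero]; positivity
    have hpos : 0 < ‖p.eval x‖ := norm_pos_iff.mpr hev
    have hδR : ‖p.eval x‖ ≤ R ^ n := by
      calc ‖p.eval x‖ ≤ δ₀ / 2 ^ k := hx2
        _ ≤ δ₀ := by
          apply div_le_self hδ₀pos.le
          exact one_le_pow₀ (by norm_num)
        _ ≤ R ^ n := hδ₀R
    obtain ⟨y, hy1, hy2, hy3⟩ := kursch_step i hdense p hm hn hR hx1 hδR hpos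
    refine ⟨y, fun _ => ⟨hy1, ?_, ?_⟩⟩
    · calc ‖p.eval y‖ ≤ ‖p.eval x‖ / 2 := hy3
        _ ≤ (δ₀ / 2 ^ k) / 2 := by linarith
        _ = δ₀ / 2 ^ (k + 1) := by ring
    · calc ‖y - x‖ ≤ ‖p.eval x‖ ^ (1 / (n : ℝ)) := hy2
        _ ≤ (δ₀ / 2 ^ k) ^ (1 / (n : ℝ)) :=
          Real.rpow_le_rpow hpos.le hx2 (by positivity)
  choose g hg using key
  -- the sequence
  set x : ℕ → L := fun k => Nat.rec 0 (fun k xk => g k xk) k with hx'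
  have hx0 : x 0 = 0 := rfl
  have hxs : ∀ k, x (k + 1) = g k (x k) := fun k => rfl
  have hinv : ∀ k, ‖x k‖ ≤ R ∧ ‖p.eval (x k)‖ ≤ δ₀ / 2 ^ k := by
    intro k
    induction k with
    | zero =>
      refine ⟨by rw [hx0, norm_zero]; positivity, ?_⟩
      rw [hx0]; simp [hδ₀]
    | succ k ih =>
      obtain ⟨h1, h2, _⟩ := hg k (x k) ih
      exact ⟨h1, h2⟩
  have hstep : ∀ k, ‖x (k + 1) - x k‖ ≤ (δ₀ / 2 ^ k) ^ (1 / (n : ℝ)) := by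
    intro k
    exact (hg k (x k) (hinv k)).2.2
  -- Cauchy
  have hgeom : ∀ k : ℕ, (δ₀ / 2 ^ k : ℝ) ^ (1 / (n : ℝ)) =
      δ₀ ^ (1 / (n : ℝ)) * (((2:ℝ)⁻¹) ^ (1 / (n : ℝ))) ^ k := by
    intro k
    rw [div_eq_mul_inv, ← inv_pow,
      Real.mul_rpow hδ₀pos.le (by positivity),
      ← Real.rpow_natCast ((2:ℝ)⁻¹) k, ← Real.rpow_mul (by norm_num),
      mul_comm (k : ℝ), Real.rpow_mul (by norm_num), Real.rpow_natCast]
  have hcauchy : CauchySeq x := by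
    apply cauchySeq_of_le_geometric (((2:ℝ)⁻¹) ^ (1 / (n : ℝ))) (δ₀ ^ (1 / (n : ℝ)))
    · exact Real.rpow_lt_one (by norm_num) (by norm_num) (by positivity)
    · intro k
      rw [dist_eq_norm, norm_sub_rev, ← hgeom k]
      exact hstep k
  obtain ⟨y, hy⟩ := cauchySeq_tendsto_of_complete hcauchy
  refine ⟨y, ?_⟩
  have hcont : Filter.Tendsto (fun k => p.eval (x k)) Filter.atTop (nhds (p.eval y)) :=
    (p.continuous.tendsto y).comp hy
  have hzero : Filter.Tendsto (fun k => p.eval (x k)) Filter.atTop (nhds 0) := by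
    apply squeeze_zero_norm (fun k => (hinv k).2)
    have : Filter.Tendsto (fun k : ℕ => δ₀ * (1/2 : ℝ) ^ k) Filter.atTop (nhds (δ₀ * 0)) :=
      (tendsto_pow_atTop_nhds_zero_of_lt_one (by norm_num) (by norm_num)).const_mul δ₀
    simpa [div_eq_mul_inv, inv_pow] using this
  exact tendsto_nhds_unique hcont hzero
end

section
/- Let K be an algebraically closed field of characteristic 0, and suppose f : U → K is a function on a subset U ⊆ K such that the graph of f is contained in the zero set of an irreducible polynomial F ∈ K[x,y] with F not of the form c(y − ax − b) (i.e., the curve is not a line), U is infinite, and f is differentiable on U in the sense that there is a function f' : U → K with ∂F/∂x(a, f(a)) + ∂F/∂y(a, f(a))·f'(a) = 0 and ∂F/∂y(a,f(a)) ≠ 0 for all a ∈ U. Then the image of the map a ↦ f'(a) on U is infinite. -/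
/-!
If `f'` took only finitely many values, it would equal a constant `m` on an infinite set
`S ⊆ U`. Then `G = ∂F/∂x + m ∂F/∂y` vanishes at the points `(a, f a)`, `a ∈ S`, of the curve.
These have pairwise distinct `x`-coordinates, so `F ∣ G`: otherwise Gauss's lemma makes `F` and
`G` coprime over `K(x)`, and their resultant with respect to `y` is a nonzero polynomial in `x`
vanishing on all of `S`. Restricted to the line `y = m x + b` through one of these points,
`u(x) = F(x, m x + b)` therefore divides its own derivative `G(x, m x + b)`; in characteristic
zero this forces `u` to be constant, hence zero, so the line divides `F` and, `F` being
irreducible, `F` is a constant multiple of it.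
-/

open MvPolynomial

theorem Set.Infinite.exists_infinite_inter_preimage_singleton {α β : Type*} {s : Set α}
    (hs : s.Infinite) {f : α → β} (hf : (f '' s).Finite) : ∃ b, (s ∩ f ⁻¹' {b}).Infinite := by
  by_contra! h
  refine hs ((hf.biUnion fun b _ => h b).subset fun a ha => ?_)
  exact Set.mem_biUnion (Set.mem_image_of_mem f ha) ⟨ha, rfl⟩

theorem Polynomial.eq_zero_of_dvd_derivative_of_isRoot {R : Type*} [Semiring R]
    [NoZeroDivisors R] [IsAddTorsionFree R] {p : Polynomial R} {a : R}
    (h : p ∣ derivative p) (ha : p.IsRoot a) : p = 0 := by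
  rw [eq_C_of_derivative_eq_zero (dvd_derivative_iff.mp h)] at ha ⊢
  simpa using ha

open Polynomial in
theorem Polynomial.exists_C_mem_span_pair_of_irreducible_of_not_dvd {R : Type*} [CommRing R]
    [IsDomain R] [IsGCDMonoid R] {p q : R[X]} (hp : Irreducible p) (hpq : ¬p ∣ q) :
    ∃ r ≠ 0, C r ∈ Ideal.span {p, q} := by
  by_cases hdeg : p.natDegree = 0
  · refine ⟨p.coeff 0, fun h => hp.ne_zero ?_, ?_⟩
    · rw [eq_C_of_natDegree_eq_zero hdeg, h, C_0]
    · rw [← eq_C_of_natDegree_eq_zero hdeg]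
      exact Ideal.subset_span (Set.mem_insert _ _)
  set L := FractionRing R
  have hprim := hp.isPrimitive hdeg
  have hinj : Function.Injective (algebraMap R L) := IsFractionRing.injective R L
  have hcop : IsCoprime (p.map (algebraMap R L)) (q.map (algebraMap R L)) :=
    (hprim.irreducible_iff_irreducible_map_fraction_map.mp hp).coprime_iff_not_dvd.mpr
      (by rwa [← hprim.dvd_iff_fraction_map_dvd_fraction_map L])
  refine ⟨p.resultant q, fun h => resultant_ne_zero _ _ hcop ?_, ?_⟩
  · rw [natDegree_map_eq_of_injective hinj, natDegree_map_eq_of_injective hinj,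
      resultant_map_map, h, map_zero]
  · obtain ⟨a, b, -, -, hab⟩ := exists_mul_add_mul_eq_C_resultant p q le_rfl le_rfl (Or.inl hdeg)
    rw [← hab, Ideal.mem_span_pair]
    exact ⟨a, b, by ring⟩

theorem Polynomial.Bivariate.eval_equivMvPolynomial {R : Type*} [CommSemiring R] (x y : R)
    (p : Polynomial (Polynomial R)) :
    MvPolynomial.eval ![x, y] (equivMvPolynomial R p) = p.evalEval x y := by
  induction p using Polynomial.induction_on' with
  | add p q hp hq => simp [hp, hq]
  | monomial n p =>
    induction p using Polynomial.induction_on' with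
    | add p q hp hq => simp_all
    | monomial k a =>
      simp_rw [← Polynomial.C_mul_X_pow_eq_monomial]
      simp [evalEval_C]

theorem MvPolynomial.dvd_sub_aeval_self {R σ : Type*} [CommRing R] {D : MvPolynomial σ R}
    {s : σ → MvPolynomial σ R} (h : ∀ i, D ∣ X i - s i) (p : MvPolynomial σ R) :
    D ∣ p - aeval s p := by
  rw [← Ideal.mem_span_singleton, ← Ideal.Quotient.mk_eq_mk_iff_sub_mem]
  have : Ideal.Quotient.mkₐ R (Ideal.span {D}) =
      (Ideal.Quotient.mkₐ R (Ideal.span {D})).comp (aeval s) := by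
    ext i
    simpa [Ideal.Quotient.mk_eq_mk_iff_sub_mem, Ideal.mem_span_singleton] using h i
  exact AlgHom.congr_fun this p

theorem MvPolynomial.derivative_aeval {R σ : Type*} [CommSemiring R] [Fintype σ]
    (g : σ → Polynomial R) (p : MvPolynomial σ R) :
    Polynomial.derivative (aeval g p) =
      ∑ i, aeval g (pderiv i p) * Polynomial.derivative (g i) := by
  classical
  induction p using MvPolynomial.induction_on with
  | C a => simp
  | add p q hp hq => simp [hp, hq, add_mul, Finset.sum_add_distrib]
  | mul_X p j hp =>
    simp only [map_mul, aeval_X, Polynomial.derivative_mul, hp, Finset.sum_mul,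
      Derivation.leibniz, pderiv_X, Pi.single_apply, smul_eq_mul, mul_ite, mul_one, mul_zero,
      map_add, apply_ite (aeval g), map_zero, add_mul, ite_mul, zero_mul, Finset.sum_add_distrib,
      Finset.sum_ite_eq, Finset.mem_univ, ↓reduceIte]
    rw [add_comm]
    exact congrArg _ (Finset.sum_congr rfl fun _ _ => by ring)

theorem Irreducible.exists_eq_C_mul_of_dvd {R σ : Type*} [CommRing R] [IsReduced R]
    {F L : MvPolynomial σ R} (hF : Irreducible F) (hL : ¬IsUnit L) (h : L ∣ F) :
    ∃ c, F = C c * L := by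
  obtain ⟨w, rfl⟩ := h
  obtain ⟨c, -, rfl⟩ :=
    isUnit_iff_eq_C_of_isReduced.mp ((hF.isUnit_or_isUnit rfl).resolve_left hL)
  exact ⟨c, mul_comm _ _⟩

open Polynomial.Bivariate in
theorem Irreducible.dvd_of_eval_graph_eq_zero {K : Type*} [Field K]
    {F G : MvPolynomial (Fin 2) K} (hF : Irreducible F) {S : Set K} (hS : S.Infinite)
    {φ : K → K} (hFS : ∀ a ∈ S, eval ![a, φ a] F = 0) (hGS : ∀ a ∈ S, eval ![a, φ a] G = 0) :
    F ∣ G := by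
  classical
  by_contra hFG
  obtain ⟨r, hr, hmem⟩ := Polynomial.exists_C_mem_span_pair_of_irreducible_of_not_dvd
    (p := (equivMvPolynomial K).symm F) (q := (equivMvPolynomial K).symm G)
    ((MulEquiv.irreducible_iff (equivMvPolynomial K).symm.toMulEquiv).mpr hF)
    (by rwa [map_dvd_iff (equivMvPolynomial K).symm])
  obtain ⟨P, Q, hPQ⟩ := Ideal.mem_span_pair.mp hmem
  refine hr (Polynomial.eq_zero_of_infinite_isRoot r (hS.mono fun a ha => ?_))
  have h := congrArg (fun p => eval ![a, φ a] (equivMvPolynomial K p)) hPQ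
  simp only [map_add, map_mul, AlgEquiv.apply_symm_apply, hFS a ha, hGS a ha,
    eval_equivMvPolynomial, Polynomial.evalEval_C] at h
  simpa using h.symm

namespace MvPolynomial

variable {K : Type*} [CommRing K]

noncomputable def restrictToLine (m b : K) : MvPolynomial (Fin 2) K →ₐ[K] Polynomial K :=
  aeval ![Polynomial.X, Polynomial.C m * Polynomial.X + Polynomial.C b]

theorem eval_restrictToLine (m b a : K) (p : MvPolynomial (Fin 2) K) :
    (restrictToLine m b p).eval a = eval ![a, m * a + b] p := by
  have hpoint : (fun i => Polynomial.aeval a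
      (![Polynomial.X, Polynomial.C m * Polynomial.X + Polynomial.C b] i)) = ![a, m * a + b] := by
    ext i
    fin_cases i <;> simp
  rw [← Polynomial.coe_aeval_eq_eval, restrictToLine, comp_aeval_apply, hpoint]
  rfl

theorem derivative_restrictToLine (m b : K) (p : MvPolynomial (Fin 2) K) :
    Polynomial.derivative (restrictToLine m b p) =
      restrictToLine m b (pderiv 0 p + C m * pderiv 1 p) := by
  simp only [restrictToLine, derivative_aeval, Fin.sum_univ_two, Matrix.cons_val_zero,
    Polynomial.derivative_X, mul_one, Matrix.cons_val_one, Matrix.cons_val_fin_one,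
    Polynomial.derivative_mul, Polynomial.derivative_C, zero_mul,
    zero_add, add_zero, map_add, map_mul, algHom_C, Polynomial.algebraMap_eq]
  ring

theorem sub_dvd_of_restrictToLine_eq_zero {m b : K} {p : MvPolynomial (Fin 2) K}
    (h : restrictToLine m b p = 0) : X 1 - C m * X 0 - C b ∣ p := by
  have hsub := dvd_sub_aeval_self (s := ![X 0, C m * X 0 + C b]) (D := X 1 - C m * X 0 - C b)
    (fun i => by fin_cases i <;> simp [sub_sub]) p
  have hcomp : (fun i => Polynomial.aeval (X 0 : MvPolynomial (Fin 2) K)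
      (![Polynomial.X, Polynomial.C m * Polynomial.X + Polynomial.C b] i)) =
      ![X 0, C m * X 0 + C b] := by
    ext i
    fin_cases i <;> simp
  rwa [← hcomp, ← comp_aeval_apply, ← restrictToLine, h, map_zero, sub_zero] at hsub

end MvPolynomial

theorem Irreducible.exists_eq_C_mul_line_of_restrictToLine_eq_zero {K : Type*} [CommRing K]
    [IsDomain K] {F : MvPolynomial (Fin 2) K} (hF : Irreducible F) {m b : K}
    (h : restrictToLine m b F = 0) : ∃ c, F = C c * (X 1 - C m * X 0 - C b) :=
  hF.exists_eq_C_mul_of_dvd (fun hu => by simpa using hu.map (eval ![0, b]))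
    (sub_dvd_of_restrictToLine_eq_zero h)

theorem derivative_image_infinite_of_not_a_line_general
    {K : Type*} [Field K] [CharZero K]
    (F : MvPolynomial (Fin 2) K) (hF : Irreducible F)
    (hnotline : ¬ ∃ c a b : K, F = C c * (X 1 - C a * X 0 - C b))
    (U : Set K) (hU : U.Infinite) (f f' : K → K)
    (hgraph : ∀ a ∈ U, eval ![a, f a] F = 0)
    (himplicit : ∀ a ∈ U,
      eval ![a, f a] (pderiv 0 F) + eval ![a, f a] (pderiv 1 F) * f' a = 0) :
    (f' '' U).Infinite := by
  intro hfin
  obtain ⟨m, hS⟩ := hU.exists_infinite_inter_preimage_singleton hfin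
  have hFG : F ∣ pderiv 0 F + C m * pderiv 1 F := by
    refine hF.dvd_of_eval_graph_eq_zero hS (fun a ha => hgraph a ha.1) fun a ⟨haU, hm⟩ => ?_
    rw [← himplicit a haU, ← hm]
    simp [mul_comm]
  obtain ⟨a₀, ha₀, -⟩ := hS.nonempty
  have hline : restrictToLine m (f a₀ - m * a₀) F = 0 := by
    refine Polynomial.eq_zero_of_dvd_derivative_of_isRoot (a := a₀) ?_ ?_
    · rw [derivative_restrictToLine]
      exact map_dvd _ hFG
    · simpa [eval_restrictToLine] using hgraph a₀ ha₀
  obtain ⟨c, hc⟩ := hF.exists_eq_C_mul_line_of_restrictToLine_eq_zero hline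
  exact hnotline ⟨c, m, _, hc⟩

theorem derivative_image_infinite_of_not_a_line
    {K : Type*} [Field K] [IsAlgClosed K] [CharZero K]
    (F : MvPolynomial (Fin 2) K) (hF : Irreducible F)
    (hnotline : ¬ ∃ c a b : K, F = C c * (X 1 - C a * X 0 - C b))
    (U : Set K) (hU : U.Infinite) (f f' : K → K)
    (hgraph : ∀ a ∈ U, eval ![a, f a] F = 0)
    (himplicit : ∀ a ∈ U,
      eval ![a, f a] (pderiv 0 F) + eval ![a, f a] (pderiv 1 F) * f' a = 0)
    (hreg : ∀ a ∈ U, eval ![a, f a] (pderiv 1 F) ≠ 0) :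
    (f' '' U).Infinite :=
  derivative_image_infinite_of_not_a_line_general F hF hnotline U hU f f' hgraph himplicit
end

section
/- Let K be a complete non-Archimedean valued field, U ⊆ K×K open, F : U → K analytic, and (a,b) ∈ U with F(a,b) = 0 and ∂F/∂y(a,b) ≠ 0. Then there exist open sets U_x, U_y ⊆ K with (a,b) ∈ U_x × U_y ⊆ U and an analytic function f : U_x → U_y such that {(x,y) ∈ U_x × U_y : F(x,y) = 0} = {(x, f(x)) : x ∈ U_x}. -/
/-!
The map `(x, y) ↦ (F (x, y), x)` has invertible derivative at `(a, b)`, so by the inverse function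
theorem it is a local homeomorphism there, and its local inverse is analytic because the map is.
The implicit function `f x` is the second coordinate of that inverse at `(0, x)`; near `(a, b)` the
zero set of `F` is exactly the graph of `f`, and shrinking to an open box gives `Ux` and `Uy`.
-/

open Filter Set Topology

theorem ContinuousLinearMap.isInvertible_of_isUnit_apply_one {R : Type*} [Semiring R]
    [TopologicalSpace R] [ContinuousMul R] {g : R →L[R] R} (h : IsUnit (g 1)) :
    g.IsInvertible :=
  ⟨ContinuousLinearEquiv.unitsEquivAut R h.unit, ContinuousLinearMap.ext_ring (by simp)⟩

theorem ImplicitFunctionData.analyticAt_implicitFunction {𝕜 E F G : Type*}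
    [NontriviallyNormedField 𝕜] [NormedAddCommGroup E] [NormedSpace 𝕜 E] [CompleteSpace E]
    [NormedAddCommGroup F] [NormedSpace 𝕜 F] [CompleteSpace F]
    [NormedAddCommGroup G] [NormedSpace 𝕜 G] [CompleteSpace G]
    (φ : ImplicitFunctionData 𝕜 E F G) (hl : AnalyticAt 𝕜 φ.leftFun φ.pt)
    (hr : AnalyticAt 𝕜 φ.rightFun φ.pt) :
    AnalyticAt 𝕜 (φ.implicitFunction (φ.leftFun φ.pt)) (φ.rightFun φ.pt) := by
  have hsymm : AnalyticAt 𝕜 φ.toOpenPartialHomeomorph.symm (φ.prodFun φ.pt) :=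
    φ.toOpenPartialHomeomorph.analyticAt_symm' φ.pt_mem_toOpenPartialHomeomorph_source
      (hl.prod hr) φ.hasStrictFDerivAt.hasFDerivAt.fderiv
  exact hsymm.comp_of_eq (analyticAt_const.prod analyticAt_id) rfl

theorem HasStrictFDerivAt.analyticAt_implicitFunctionOfProdDomain {𝕜 E₁ E₂ F : Type*}
    [NontriviallyNormedField 𝕜] [NormedAddCommGroup E₁] [NormedSpace 𝕜 E₁] [CompleteSpace E₁]
    [NormedAddCommGroup E₂] [NormedSpace 𝕜 E₂] [CompleteSpace E₂]
    [NormedAddCommGroup F] [NormedSpace 𝕜 F] [CompleteSpace F]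
    {f : E₁ × E₂ → F} {f'u : E₁ × E₂ →L[𝕜] F} {u : E₁ × E₂}
    (dfu : HasStrictFDerivAt f f'u u) (if₂u : (f'u ∘L .inr 𝕜 E₁ E₂).IsInvertible)
    (hf : AnalyticAt 𝕜 f u) :
    AnalyticAt 𝕜 (dfu.implicitFunctionOfProdDomain if₂u) u.1 :=
  analyticAt_snd.comp
    ((dfu.implicitFunctionDataOfProdDomain if₂u).analyticAt_implicitFunction hf analyticAt_fst)

theorem exists_isOpen_prod_subset_mapsTo {X Y : Type*} [TopologicalSpace X] [TopologicalSpace Y]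
    {f : X → Y} {a : X} {b : Y} (hf : Tendsto f (𝓝 a) (𝓝 b)) {W : Set (X × Y)}
    (hW : W ∈ 𝓝 (a, b)) {p : X → Prop} (hp : ∀ᶠ x in 𝓝 a, p x) :
    ∃ Ux Uy, IsOpen Ux ∧ IsOpen Uy ∧ a ∈ Ux ∧ b ∈ Uy ∧ Ux ×ˢ Uy ⊆ W ∧ MapsTo f Ux Uy ∧
      ∀ x ∈ Ux, p x := by
  obtain ⟨Vx, Uy, hVx, hUy, haVx, hbUy, hsub⟩ := isOpen_prod_iff.1 isOpen_interior a b
    (mem_interior_iff_mem_nhds.2 hW)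
  -- `f ⁻¹' Uy` is only a neighbourhood of `a`, hence the interior.
  set Ux := interior (Vx ∩ f ⁻¹' Uy ∩ {x | p x})
  have haUx : a ∈ Ux := mem_interior_iff_mem_nhds.2 <|
    inter_mem (inter_mem (hVx.mem_nhds haVx) (hf (hUy.mem_nhds hbUy))) hp
  refine ⟨Ux, Uy, isOpen_interior, hUy, haUx, hbUy, ?_, ?_, ?_⟩
  · exact fun v hv => interior_subset (hsub ⟨(interior_subset hv.1).1.1, hv.2⟩)
  · exact fun x hx => (interior_subset hx).1.2
  · exact fun x hx => (interior_subset hx).2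

theorem sep_prod_eq_image_graph {X Y : Type*} {s : Set X} {t : Set Y} {f : X → Y}
    {p : X × Y → Prop} (hf : MapsTo f s t) (hp : ∀ x ∈ s, ∀ y ∈ t, p (x, y) ↔ f x = y) :
    {v ∈ s ×ˢ t | p v} = (fun x => (x, f x)) '' s := by
  ext v
  constructor
  · rintro ⟨⟨hx, hy⟩, hv⟩
    exact ⟨v.1, hx, Prod.ext rfl ((hp _ hx _ hy).1 hv)⟩
  · rintro ⟨x, hx, rfl⟩
    exact ⟨⟨hx, hf hx⟩, (hp x hx (f x) (hf hx)).2 rfl⟩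

theorem nonarchimedean_implicit_function_theorem_general
    {K : Type*} [NontriviallyNormedField K] [CompleteSpace K]
    (U : Set (K × K)) (hU : IsOpen U) (F : K × K → K)
    (hF : AnalyticOnNhd K F U)
    (a b : K) (hab : (a, b) ∈ U) (hFab : F (a, b) = 0)
    (hdy : fderiv K F (a, b) (0, 1) ≠ 0) :
    ∃ Ux Uy : Set K, IsOpen Ux ∧ IsOpen Uy ∧ a ∈ Ux ∧ b ∈ Uy ∧
      Ux ×ˢ Uy ⊆ U ∧
      ∃ f : K → K, AnalyticOnNhd K f Ux ∧ (∀ x ∈ Ux, f x ∈ Uy) ∧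
        {v ∈ Ux ×ˢ Uy | F v = 0} = (fun x => (x, f x)) '' Ux := by
  have hu : HasStrictFDerivAt F (fderiv K F (a, b)) (a, b) := (hF _ hab).hasStrictFDerivAt
  have hinv : (fderiv K F (a, b) ∘L .inr K K K).IsInvertible :=
    ContinuousLinearMap.isInvertible_of_isUnit_apply_one (by simpa using hdy)
  set ψ := hu.implicitFunctionOfProdDomain hinv
  have hW : {v | v ∈ U ∧ (F v = 0 ↔ ψ v.1 = v.2)} ∈ 𝓝 (a, b) := by
    filter_upwards [hU.mem_nhds hab, hu.eventually_apply_eq_iff_implicitFunctionOfProdDomain hinv]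
      with v hvU hv
    exact ⟨hvU, by rwa [hFab] at hv⟩
  obtain ⟨Ux, Uy, hUx, hUy, haUx, hbUy, hbox, hmaps, hψ⟩ :=
    exists_isOpen_prod_subset_mapsTo (hu.tendsto_implicitFunctionOfProdDomain hinv) hW
      (hu.analyticAt_implicitFunctionOfProdDomain hinv (hF _ hab)).eventually_analyticAt
  exact ⟨Ux, Uy, hUx, hUy, haUx, hbUy, fun v hv => (hbox hv).1, ψ, hψ, hmaps,
    sep_prod_eq_image_graph hmaps fun x hx y hy => (hbox ⟨hx, hy⟩).2⟩

theorem nonarchimedean_implicit_function_theorem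
    {K : Type*} [NontriviallyNormedField K] [CompleteSpace K] [IsUltrametricDist K]
    (U : Set (K × K)) (hU : IsOpen U) (F : K × K → K)
    (hF : AnalyticOnNhd K F U)
    (a b : K) (hab : (a, b) ∈ U) (hFab : F (a, b) = 0)
    (hdy : fderiv K F (a, b) (0, 1) ≠ 0) :
    ∃ Ux Uy : Set K, IsOpen Ux ∧ IsOpen Uy ∧ a ∈ Ux ∧ b ∈ Uy ∧
      Ux ×ˢ Uy ⊆ U ∧
      ∃ f : K → K, AnalyticOnNhd K f Ux ∧ (∀ x ∈ Ux, f x ∈ Uy) ∧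
        {v ∈ Ux ×ˢ Uy | F v = 0} = (fun x => (x, f x)) '' Ux :=
  nonarchimedean_implicit_function_theorem_general U hU F hF a b hab hFab hdy
end
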